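/- Suppose Q = Q(A_1, …, A_n) where each A_i is a finite Q-subdirectly irreducible algebra and A_i does not embed into A_j for i ≠ j. Then {A_1, …, A_n} is, up to isomorphism, the unique minimal generating set for Q: for any finite set of finite algebras {B_1,…,B_k} with Q(B_1,…,B_k) = Q, the multiset [|A_1|,…,|A_n|] is ≤_m the multiset [|B_1|,…,|B_k|], and if {B_1,…,B_k} is also minimal then each B_i is isomorphic to some A_j. -/

import Mathlib

/-- An algebraic signature: a type of operation symbols with arities. -/
structure Signature where
  ops : Type
  arity : ops → ℕ

/-- An algebra for a signature `S`. -/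
structure Alg (S : Signature) where
  carrier : Type
  interp : ∀ o : S.ops, (Fin (S.arity o) → carrier) → carrier

/-- Terms over a set `X` of variables. -/
inductive Term (S : Signature) (X : Type) : Type where
  | var : X → Term S X
  | op : (o : S.ops) → (Fin (S.arity o) → Term S X) → Term S X

variable {S : Signature}

/-- Evaluation of a term in an algebra under an assignment of variables. -/
def Term.eval {X : Type} (A : Alg S) (h : X → A.carrier) : Term S X → A.carrier
  | .var x => h x
  | .op o args => A.interp o (fun i => (args i).eval A h)

/-- Application of a substitution to a term. -/
def Term.subst (σ : ℕ → Term S ℕ) : Term S ℕ → Term S ℕ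
  | .var x => σ x
  | .op o args => .op o (fun i => (args i).subst σ)

/-- Homomorphisms of algebras. -/
def IsHom (A B : Alg S) (f : A.carrier → B.carrier) : Prop :=
  ∀ (o : S.ops) (args : Fin (S.arity o) → A.carrier),
    f (A.interp o args) = B.interp o (fun i => f (args i))

/-- Embeddings of algebras: injective homomorphisms. -/
def IsEmbedding (A B : Alg S) (f : A.carrier → B.carrier) : Prop :=
  IsHom A B f ∧ Function.Injective f

/-- `A` embeds into `B` (i.e. `A` is isomorphic to a subalgebra of `B`). -/
def Embeds (A B : Alg S) : Prop := ∃ f, IsEmbedding A B f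

/-- Isomorphism of algebras. -/
def Iso (A B : Alg S) : Prop := ∃ f, IsHom A B f ∧ Function.Bijective f

/-- Product of a family of algebras. -/
def ProdAlg {I : Type} (F : I → Alg S) : Alg S where
  carrier := ∀ i, (F i).carrier
  interp o args i := (F i).interp o (fun j => args j i)

/-- Binary product of algebras. -/
def Alg.prod (A B : Alg S) : Alg S where
  carrier := A.carrier × B.carrier
  interp o args := (A.interp o (fun i => (args i).1), B.interp o (fun i => (args i).2))

/-- `A` is a subdirect product of the family `F`: there is an embedding of `A`
into the product whose composition with each projection is surjective. -/
def IsSubdirectProduct (A : Alg S) {I : Type} (F : I → Alg S) : Prop :=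
  ∃ f : A.carrier → (ProdAlg F).carrier,
    IsEmbedding A (ProdAlg F) f ∧ ∀ i, Function.Surjective (fun a => f a i)

/-- An equation: an ordered pair of terms. -/
abbrev Eqn (S : Signature) (X : Type) := Term S X × Term S X

/-- An equation holds in an algebra. -/
def Alg.SatisfiesEqn {X : Type} (A : Alg S) (e : Eqn S X) : Prop :=
  ∀ h : X → A.carrier, e.1.eval A h = e.2.eval A h

/-- An equation is valid in a class of algebras. -/
def EqValid (K : Set (Alg S)) (e : Eqn S ℕ) : Prop := ∀ A ∈ K, A.SatisfiesEqn e

/-- A quasiequation: finitely many premises and one conclusion. -/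
structure Quasieq (S : Signature) where
  prem : List (Eqn S ℕ)
  concl : Eqn S ℕ

/-- A quasiequation holds in an algebra. -/
def Alg.SatisfiesQ (A : Alg S) (q : Quasieq S) : Prop :=
  ∀ h : ℕ → A.carrier,
    (∀ e ∈ q.prem, e.1.eval A h = e.2.eval A h) →
      q.concl.1.eval A h = q.concl.2.eval A h

/-- The quasivariety generated by `K`: the class axiomatized by all
quasiequations valid in `K`. -/
def QGen (K : Set (Alg S)) : Set (Alg S) :=
  { A | ∀ q : Quasieq S, (∀ B ∈ K, B.SatisfiesQ q) → A.SatisfiesQ q }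

/-- The variety generated by `K`: the class axiomatized by all
equations valid in `K`. -/
def VGen (K : Set (Alg S)) : Set (Alg S) :=
  { A | ∀ e : Eqn S ℕ, (∀ B ∈ K, B.SatisfiesEqn e) → A.SatisfiesEqn e }

/-- A quasivariety is a class axiomatizable by quasiequations. -/
def IsQuasivariety (Q : Set (Alg S)) : Prop := QGen Q = Q

/-- `A` is `Q`-subdirectly irreducible: `A ∈ Q` and for every `Q`-subdirect
representation of `A`, `A` is isomorphic to one of the components. -/
def QSubdirectlyIrreducible (Q : Set (Alg S)) (A : Alg S) : Prop :=
  A ∈ Q ∧ ∀ (I : Type) (F : I → Alg S), (∀ i, F i ∈ Q) →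
    IsSubdirectProduct A F → ∃ i, Iso A (F i)

/-- A congruence on an algebra. -/
structure Cong (A : Alg S) where
  r : A.carrier → A.carrier → Prop
  iseqv : Equivalence r
  compat : ∀ (o : S.ops) (a b : Fin (S.arity o) → A.carrier),
    (∀ i, r (a i) (b i)) → r (A.interp o a) (A.interp o b)

def Cong.setoid {A : Alg S} (θ : Cong A) : Setoid A.carrier := ⟨θ.r, θ.iseqv⟩

/-- Quotient algebra of `A` by a congruence `θ`. -/
noncomputable def QuotAlg (A : Alg S) (θ : Cong A) : Alg S where
  carrier := Quotient θ.setoid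
  interp o args := Quotient.mk θ.setoid (A.interp o (fun i => (args i).out))

/-- The term algebra over variables `X`. -/
def TermAlg (S : Signature) (X : Type) : Alg S where
  carrier := Term S X
  interp := Term.op

/-- The congruence of all identifications valid in `K` on the term algebra:
the intersection of all congruences whose quotient embeds into a member of `K`. -/
def freeCong (K : Set (Alg S)) (X : Type) : Cong (TermAlg S X) where
  r φ ψ := ∀ A ∈ K, ∀ h : X → A.carrier, φ.eval A h = ψ.eval A h
  iseqv := by
    constructor
    · intro φ A hA h; rfl
    · intro φ ψ H A hA h; exact (H A hA h).symm
    · intro a b c H1 H2 A hA h; exact (H1 A hA h).trans (H2 A hA h)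
  compat := by
    intro o a b hab A hA h
    show Term.eval A h (Term.op o a) = Term.eval A h (Term.op o b)
    simp only [Term.eval]
    congr 1
    funext i
    exact hab i A hA h

/-- The free algebra of `K` over variables `X`. -/
noncomputable def FreeAlg (K : Set (Alg S)) (X : Type) : Alg S :=
  QuotAlg (TermAlg S X) (freeCong K X)

/-- `σ` is a `K`-unifier of the finite set of equations `Γ`. -/
def Unifier (K : Set (Alg S)) (σ : ℕ → Term S ℕ) (Γ : List (Eqn S ℕ)) : Prop :=
  ∀ e ∈ Γ, EqValid K (e.1.subst σ, e.2.subst σ)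

/-- `Γ` is `K`-unifiable. -/
def Unifiable (K : Set (Alg S)) (Γ : List (Eqn S ℕ)) : Prop := ∃ σ, Unifier K σ Γ

/-- The quasiequation `Γ ⇒ e` is `K`-admissible: every `K`-unifier of the
premises unifies the conclusion. -/
def Admissible (K : Set (Alg S)) (Γ : List (Eqn S ℕ)) (e : Eqn S ℕ) : Prop :=
  ∀ σ, Unifier K σ Γ → EqValid K (e.1.subst σ, e.2.subst σ)

/-- The quasiequation `Γ ⇒ e` is valid in the class `K` (`Γ ⊨_K e`). -/
def Models (K : Set (Alg S)) (Γ : List (Eqn S ℕ)) (e : Eqn S ℕ) : Prop :=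
  ∀ A ∈ K, ∀ h : ℕ → A.carrier,
    (∀ e' ∈ Γ, e'.1.eval A h = e'.2.eval A h) → e.1.eval A h = e.2.eval A h

/-- `Γ` is satisfiable in the algebra `A`. -/
def SatIn (A : Alg S) (Γ : List (Eqn S ℕ)) : Prop :=
  ∃ h : ℕ → A.carrier, ∀ e ∈ Γ, e.1.eval A h = e.2.eval A h

/-- The Dershowitz–Manna ordering on multisets of natural numbers. -/
def MsLE (M N : Multiset ℕ) : Prop :=
  ∀ x, N.count x < M.count x → ∃ y, x < y ∧ M.count y < N.count y

/-- The multiset of cardinalities of a finite family of algebras. -/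
noncomputable def cardsOf {S : Signature} {n : ℕ} (A : Fin n → Alg S) : Multiset ℕ :=
  ↑(List.ofFn fun i => Nat.card (A i).carrier)

/-! A finite `Q(K)`-subdirectly irreducible algebra `A` embeds into a member of `K`: the
homomorphisms from `A` into members of `K` separate its points, because otherwise the
quasiequation whose premises are the diagram of `A` and whose conclusion identifies two
unseparated points would hold in `K` but fail in `A`. Hence the images of `A` form a
`Q`-subdirect representation, and some component is a copy of `A`.

So every `A i` embeds into some `B (f i)` of a second generating family. Since no `A i` embeds
into a different `A i'`, a `B j` of the same size as some `A i` mapped to it is a copy of that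
`A i` and receives no other `A i'`. Removing these common sizes from both multisets of
cardinalities, each remaining size of the `A`-side lies strictly below some remaining size of
the `B`-side, which is the Dershowitz–Manna comparison; if the comparison also goes the other
way, nothing remains on the `B`-side. -/

theorem IsHom.map_eval {A B : Alg S} {f : A.carrier → B.carrier} (hf : IsHom A B f)
    {X : Type} (h : X → A.carrier) (t : Term S X) :
    f (t.eval A h) = t.eval B (f ∘ h) := by
  induction t with
  | var x => rfl
  | op o args ih =>
    simp only [Term.eval, hf o, ih]

theorem Iso.embeds {A B : Alg S} (h : Iso A B) : Embeds A B :=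
  let ⟨f, hf, hbij⟩ := h
  ⟨f, hf, hbij.1⟩

theorem Iso.symm {A B : Alg S} (h : Iso A B) : Iso B A := by
  obtain ⟨f, hf, hbij⟩ := h
  obtain ⟨g, hgf, hfg⟩ := Function.bijective_iff_has_inverse.mp hbij
  refine ⟨g, fun o args => hbij.1 ?_, hfg.injective, hgf.surjective⟩
  simp only [hf o, hfg _]

theorem Embeds.trans {A B C : Alg S} (hAB : Embeds A B) (hBC : Embeds B C) : Embeds A C := by
  obtain ⟨f, hf, hfi⟩ := hAB
  obtain ⟨g, hg, hgi⟩ := hBC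
  exact ⟨g ∘ f, fun o args => by simp only [Function.comp, hf o, hg o], hgi.comp hfi⟩

theorem Embeds.iso_of_card_eq {A B : Alg S} [Finite B.carrier] (h : Embeds A B)
    (hcard : Nat.card A.carrier = Nat.card B.carrier) : Iso A B :=
  let ⟨f, hf, hfi⟩ := h
  ⟨f, hf, hfi.bijective_of_nat_card_le hcard.ge⟩

theorem Embeds.card_le {A B : Alg S} [Finite B.carrier] (h : Embeds A B) :
    Nat.card A.carrier ≤ Nat.card B.carrier :=
  let ⟨f, _, hfi⟩ := h
  Nat.card_le_card_of_injective f hfi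

theorem mem_QGen_of_mem {K : Set (Alg S)} {A : Alg S} (hA : A ∈ K) : A ∈ QGen K :=
  fun _ hq => hq A hA

theorem mem_QGen_of_embeds {K : Set (Alg S)} {A B : Alg S} (hB : B ∈ QGen K)
    (hAB : Embeds A B) : A ∈ QGen K := by
  obtain ⟨f, hf, hfi⟩ := hAB
  intro q hq h hprem
  apply hfi
  rw [hf.map_eval, hf.map_eval]
  exact hB q hq (f ∘ h) fun e he => by rw [← hf.map_eval, ← hf.map_eval, hprem e he]

def IsHom.range {A B : Alg S} {f : A.carrier → B.carrier} (hf : IsHom A B f) : Alg S where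
  carrier := Set.range f
  interp o args := ⟨B.interp o (fun i => (args i).val), by
    choose pre hpre using fun i => (args i).2
    exact ⟨A.interp o pre, by simp only [hf o, hpre]⟩⟩

theorem IsHom.range_embeds {A B : Alg S} {f : A.carrier → B.carrier} (hf : IsHom A B f) :
    Embeds hf.range B :=
  ⟨Subtype.val, fun _ _ => rfl, Subtype.val_injective⟩

theorem IsHom.isHom_rangeFactorization {A B : Alg S} {f : A.carrier → B.carrier}
    (hf : IsHom A B f) : IsHom A hf.range (Set.rangeFactorization f) :=
  fun o args => Subtype.ext (hf o args)

/-- The equation `o(x_{a_1}, …, x_{a_m}) ≈ x_{o(a_1, …, a_m)}` of the diagram of `A`, the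
variable `x_a` being numbered `idx a`. -/
def diagramEqn {A : Alg S} (idx : A.carrier → ℕ) (p : Σ o : S.ops, Fin (S.arity o) → A.carrier) :
    Eqn S ℕ :=
  (.op p.1 fun i => .var (idx (p.2 i)), .var (idx (A.interp p.1 p.2)))

theorem forall_diagramEqn_iff_isHom {A C : Alg S} (idx : A.carrier → ℕ) (h : ℕ → C.carrier) :
    (∀ p, (diagramEqn idx p).1.eval C h = (diagramEqn idx p).2.eval C h) ↔
      IsHom A C (h ∘ idx) :=
  ⟨fun H o args => (H ⟨o, args⟩).symm, fun H ⟨o, args⟩ => (H o args).symm⟩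

theorem eq_of_forall_isHom_apply_eq [Finite S.ops] {K : Set (Alg S)} {A : Alg S}
    [Finite A.carrier] (hA : A ∈ QGen K) {u v : A.carrier}
    (huv : ∀ C ∈ K, ∀ h, IsHom A C h → h u = h v) : u = v := by
  have : Nonempty A.carrier := ⟨u⟩
  obtain ⟨idx, hidx⟩ := exists_injective_nat A.carrier
  obtain ⟨l, -, hl⟩ := Finite.exists_univ_list (Σ o : S.ops, Fin (S.arity o) → A.carrier)
  let q : Quasieq S := ⟨l.map (diagramEqn idx), (.var (idx u), .var (idx v))⟩
  have hprem : ∀ C (h : ℕ → C.carrier),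
      (∀ e ∈ q.prem, e.1.eval C h = e.2.eval C h) ↔ IsHom A C (h ∘ idx) := by
    intro C h
    simp only [q, List.forall_mem_map, ← forall_diagramEqn_iff_isHom]
    exact ⟨fun H p => H p (hl p), fun H p _ => H p⟩
  have hK : ∀ C ∈ K, C.SatisfiesQ q := fun C hC h hh => huv C hC _ ((hprem C h).1 hh)
  have hinv : Function.LeftInverse (Function.invFun idx) idx := Function.leftInverse_invFun hidx
  have hid : IsHom A A (Function.invFun idx ∘ idx) := by
    rw [hinv.comp_eq_id]
    exact fun _ _ => rfl
  calc u = Function.invFun idx (idx u) := (hinv u).symm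
    _ = Function.invFun idx (idx v) := hA q hK _ ((hprem A _).2 hid)
    _ = v := hinv v

theorem QSubdirectlyIrreducible.exists_embeds [Finite S.ops] {ι : Type} {B : ι → Alg S}
    {A : Alg S} [Finite A.carrier] (hA : QSubdirectlyIrreducible (QGen (Set.range B)) A) :
    ∃ j, Embeds A (B j) := by
  obtain ⟨hAQ, hirr⟩ := hA
  let F : (Σ j, {h : A.carrier → (B j).carrier // IsHom A (B j) h}) → Alg S :=
    fun p => p.2.2.range
  have hFQ : ∀ p, F p ∈ QGen (Set.range B) := fun p =>
    mem_QGen_of_embeds (mem_QGen_of_mem ⟨p.1, rfl⟩) p.2.2.range_embeds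
  have hsub : IsSubdirectProduct A F := by
    refine ⟨fun a p => Set.rangeFactorization p.2.1 a, ⟨?_, ?_⟩, ?_⟩
    · exact fun o args => funext fun p => p.2.2.isHom_rangeFactorization o args
    · refine fun a a' haa' => eq_of_forall_isHom_apply_eq hAQ ?_
      rintro _ ⟨j, rfl⟩ h hh
      exact congrArg Subtype.val (congrFun haa' ⟨j, h, hh⟩)
    · exact fun p => Set.rangeFactorization_surjective
  obtain ⟨p, hiso⟩ := hirr _ F hFQ hsub
  exact ⟨p.1, hiso.embeds.trans p.2.2.range_embeds⟩

theorem msLE_add_left_iff {M P Q : Multiset ℕ} : MsLE (M + P) (M + Q) ↔ MsLE P Q := by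
  simp only [MsLE, Multiset.count_add, Nat.add_lt_add_iff_left]

theorem count_eq_zero_of_forall_exists_lt {P Q : Multiset ℕ} (hPQ : ∀ x ∈ P, ∃ y ∈ Q, x < y)
    {m : ℕ} (hm : ∀ y ∈ Q, y ≤ m) : P.count m = 0 :=
  Multiset.count_eq_zero.mpr fun hmP =>
    let ⟨y, hyQ, hmy⟩ := hPQ m hmP
    (hm y hyQ).not_gt hmy

theorem msLE_of_forall_exists_lt {P Q : Multiset ℕ} (hPQ : ∀ x ∈ P, ∃ y ∈ Q, x < y) :
    MsLE P Q := by
  intro x hx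
  obtain ⟨y, hyQ, hxy⟩ := hPQ x (Multiset.count_pos.mp (by omega))
  obtain ⟨m, hmQ, hm⟩ : ∃ m ∈ Q, ∀ y ∈ Q, y ≤ m :=
    Multiset.exists_max_image id (by rintro rfl; exact Multiset.notMem_zero y hyQ)
  refine ⟨m, hxy.trans_le (hm y hyQ), ?_⟩
  rw [count_eq_zero_of_forall_exists_lt hPQ hm]
  exact Multiset.count_pos.mpr hmQ

theorem eq_zero_of_msLE_of_forall_exists_lt {P Q : Multiset ℕ}
    (hPQ : ∀ x ∈ P, ∃ y ∈ Q, x < y) (hQP : MsLE Q P) : Q = 0 := by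
  by_contra hQ
  obtain ⟨m, hmQ, hm⟩ : ∃ m ∈ Q, ∀ y ∈ Q, y ≤ m := Multiset.exists_max_image id hQ
  obtain ⟨z, hmz, hz⟩ := hQP m <| by
    rw [count_eq_zero_of_forall_exists_lt hPQ hm]
    exact Multiset.count_pos.mpr hmQ
  obtain ⟨y, hyQ, hzy⟩ := hPQ z (Multiset.count_pos.mp (by omega))
  exact (hm y hyQ).not_gt (hmz.trans hzy)

theorem exists_common_add_of_le_comp {ι κ : Type*} [Fintype ι] [Fintype κ] {a : ι → ℕ}
    {b : κ → ℕ} {f : ι → κ} (hle : ∀ i, a i ≤ b (f i))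
    (hsolo : ∀ i i', a i = b (f i) → f i' = f i → i' = i) :
    ∃ M P Q : Multiset ℕ, Finset.univ.val.map a = M + P ∧ Finset.univ.val.map b = M + Q ∧
      (∀ x ∈ P, ∃ y ∈ Q, x < y) ∧ ∀ j, (∃ i, f i = j ∧ a i = b j) ∨ b j ∈ Q := by
  classical
  let E : Finset ι := Finset.univ.filter fun i => a i = b (f i)
  let T : Finset κ := E.image f
  have hmemT : ∀ {j}, j ∈ T ↔ ∃ i, a i = b (f i) ∧ f i = j := by
    simp [T, E]
  have hinj : Set.InjOn f E := fun i hi i' _ hii' =>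
    (hsolo i i' (Finset.mem_filter.mp hi).2 hii'.symm).symm
  refine ⟨E.val.map a, (Finset.univ.filter fun i => a i ≠ b (f i)).val.map a,
    (Finset.univ.filter (· ∉ T)).val.map b, ?_, ?_, ?_, fun j => ?_⟩
  · rw [← Multiset.map_add, Finset.filter_val, Finset.filter_val, Multiset.filter_add_not]
  · have hT : T.val.map b = E.val.map a := by
      rw [Finset.image_val_of_injOn hinj, Multiset.map_map]
      exact Multiset.map_congr rfl fun i hi => ((Finset.mem_filter.mp hi).2).symm
    calc Finset.univ.val.map b
        = (Finset.univ.val.filter (· ∈ T)).map b + (Finset.univ.val.filter (· ∉ T)).map b := by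
          rw [← Multiset.map_add, Multiset.filter_add_not]
      _ = _ := by rw [← Finset.filter_val, Finset.filter_univ_mem, hT]; rfl
  · simp only [Multiset.mem_map, Finset.mem_val, Finset.mem_filter, Finset.mem_univ, true_and]
    rintro _ ⟨i, hi, rfl⟩
    refine ⟨b (f i), ⟨f i, fun hfi => hi ?_, rfl⟩, (hle i).lt_of_ne hi⟩
    obtain ⟨i', hi', hfi'⟩ := hmemT.mp hfi
    rwa [hsolo i' i hi' hfi'.symm]
  · by_cases hj : j ∈ T
    · obtain ⟨i, hi, rfl⟩ := hmemT.mp hj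
      exact .inl ⟨i, rfl, hi⟩
    · exact .inr (Multiset.mem_map_of_mem b (by simpa using hj))

theorem cardsOf_eq_map {n : ℕ} (A : Fin n → Alg S) :
    cardsOf A = Finset.univ.val.map fun i => Nat.card (A i).carrier :=
  (Fin.univ_val_map _).symm

theorem exists_embeds_of_QGen_eq [Finite S.ops] {ι κ : Type} {A : ι → Alg S} {B : κ → Alg S}
    (hfin : ∀ i, Finite (A i).carrier) (hBfin : ∀ j, Finite (B j).carrier)
    (hirr : ∀ i, QSubdirectlyIrreducible (QGen (Set.range A)) (A i))
    (hne : ∀ i j, i ≠ j → ¬ Embeds (A i) (A j))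
    (hQ : QGen (Set.range B) = QGen (Set.range A)) :
    ∃ f : ι → κ, (∀ i, Embeds (A i) (B (f i))) ∧
      ∀ i i', Nat.card (A i).carrier = Nat.card (B (f i)).carrier → f i' = f i → i' = i := by
  have hirrB : ∀ i, QSubdirectlyIrreducible (QGen (Set.range B)) (A i) := hQ ▸ hirr
  choose f hf using fun i => have := hfin i; (hirrB i).exists_embeds
  refine ⟨f, hf, fun i i' hcard hfi => by_contra fun hii' => hne i' i hii' ?_⟩
  have := hBfin (f i)
  exact (hfi ▸ hf i').trans ((hf i).iso_of_card_eq hcard).symm.embeds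

theorem exists_common_add_cardsOf [Finite S.ops] {n k : ℕ} {A : Fin n → Alg S}
    {B : Fin k → Alg S} (hfin : ∀ i, Finite (A i).carrier) (hBfin : ∀ j, Finite (B j).carrier)
    (hirr : ∀ i, QSubdirectlyIrreducible (QGen (Set.range A)) (A i))
    (hne : ∀ i j, i ≠ j → ¬ Embeds (A i) (A j))
    (hQ : QGen (Set.range B) = QGen (Set.range A)) :
    ∃ M P Q : Multiset ℕ, cardsOf A = M + P ∧ cardsOf B = M + Q ∧ (∀ x ∈ P, ∃ y ∈ Q, x < y) ∧
      ∀ j, (∃ i, Iso (B j) (A i)) ∨ Nat.card (B j).carrier ∈ Q := by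
  obtain ⟨f, hf, hsolo⟩ := exists_embeds_of_QGen_eq hfin hBfin hirr hne hQ
  obtain ⟨M, P, Q, hA, hB, hPQ, hj⟩ :=
    exists_common_add_of_le_comp (b := fun j => Nat.card (B j).carrier) (f := f)
      (fun i => have := hBfin (f i); (hf i).card_le) hsolo
  refine ⟨M, P, Q, by rw [cardsOf_eq_map, hA], by rw [cardsOf_eq_map, hB], hPQ,
    fun j => (hj j).imp_left ?_⟩
  rintro ⟨i, rfl, hcard⟩
  have := hBfin (f i)
  exact ⟨i, ((hf i).iso_of_card_eq hcard).symm⟩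

/-- If `Q = Q(A_1,…,A_n)` with each `A_i` finite, `Q`-subdirectly irreducible,
and no `A_i` embedding into a different `A_j`, then `{A_1,…,A_n}` is the unique
minimal generating set of `Q` up to isomorphism: the multiset of its cardinalities
is `≤ₘ` that of any finite generating set of finite algebras, and any minimal
generating set consists of isomorphic copies of the `A_i`. -/
theorem stmt5 {S : Signature} [Finite S.ops] {n : ℕ} (A : Fin n → Alg S)
    (hfin : ∀ i, Finite (A i).carrier)
    (hirr : ∀ i, QSubdirectlyIrreducible (QGen (Set.range A)) (A i))
    (hne : ∀ i j, i ≠ j → ¬ Embeds (A i) (A j)) :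
    (∀ (k : ℕ) (B : Fin k → Alg S), (∀ j, Finite (B j).carrier) →
        QGen (Set.range B) = QGen (Set.range A) →
        MsLE (cardsOf A) (cardsOf B)) ∧
    (∀ (k : ℕ) (B : Fin k → Alg S), (∀ j, Finite (B j).carrier) →
        QGen (Set.range B) = QGen (Set.range A) →
        (∀ (m : ℕ) (C : Fin m → Alg S), (∀ l, Finite (C l).carrier) →
            QGen (Set.range C) = QGen (Set.range A) →
            MsLE (cardsOf B) (cardsOf C)) →
        ∀ j, ∃ i, Iso (B j) (A i)) := by
  refine ⟨fun k B hBfin hQ => ?_, fun k B hBfin hQ hmin j => ?_⟩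
  · obtain ⟨M, P, Q, hA, hB, hPQ, -⟩ := exists_common_add_cardsOf hfin hBfin hirr hne hQ
    rw [hA, hB, msLE_add_left_iff]
    exact msLE_of_forall_exists_lt hPQ
  · obtain ⟨M, P, Q, hA, hB, hPQ, hj⟩ := exists_common_add_cardsOf hfin hBfin hirr hne hQ
    have hQP : MsLE Q P := by
      rw [← msLE_add_left_iff, ← hA, ← hB]
      exact hmin n A hfin rfl
    have hQ0 : Q = 0 := eq_zero_of_msLE_of_forall_exists_lt hPQ hQP
    exact (hj j).resolve_right (by simp [hQ0])
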